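/- arXiv:2405.12578 — 2 statements merged into one kernel-verified Lean document; each statement's English description precedes it below -/
import Mathlib

section
/- Let Ω be a measure space with total measure 1, let ω, ω' ⊂ Ω be measurable with |ω| > 0 and |ω'| > 0, and let u, v ∈ L²(Ω). Then (1/|ω|)∫_ω |u−v|²dx ≤ 5·(1/|ω| + 1/|ω'|)·( ∫_Ω |u − [u]_Ω|²dx + ∫_Ω |v − [v]_Ω|²dx + ∫_{ω'} |u−v|² dx ). -/
open MeasureTheory

set_option maxHeartbeats 1000000

private lemma aux1 (w c : ℝ) : (w + c) ^ 2 ≤ 5 / 2 * w ^ 2 + 5 / 3 * c ^ 2 := by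
  nlinarith [sq_nonneg (3 * w - 2 * c)]

private lemma aux2 (x w : ℝ) : (x - w) ^ 2 ≤ 3 * x ^ 2 + 3 / 2 * w ^ 2 := by
  nlinarith [sq_nonneg (2 * x + w)]

theorem transfer_estimate
    {Ω : Type*} [MeasureSpace Ω] [IsProbabilityMeasure (volume : Measure Ω)]
    (ω ω' : Set Ω) (hω : MeasurableSet ω) (hω' : MeasurableSet ω')
    (hωpos : 0 < (volume ω).toReal) (hω'pos : 0 < (volume ω').toReal)
    (u v : Ω → ℝ) (hu : MemLp u 2 volume) (hv : MemLp v 2 volume) :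
    (volume ω).toReal⁻¹ * ∫ x in ω, |u x - v x| ^ 2 ≤
      5 * ((volume ω).toReal⁻¹ + (volume ω').toReal⁻¹) *
        ((∫ x, |u x - ∫ y, u y| ^ 2) + (∫ x, |v x - ∫ y, v y| ^ 2) +
          ∫ x in ω', |u x - v x| ^ 2) := by
  simp only [sq_abs]
  set a := ∫ y, u y with ha
  set b := ∫ y, v y with hb
  set c := a - b with hc
  set P := (volume ω).toReal with hP
  set Q := (volume ω').toReal with hQ
  have hu2 : MemLp (fun x => u x - a) 2 volume := hu.sub (memLp_const a)
  have hv2 : MemLp (fun x => v x - b) 2 volume := hv.sub (memLp_const b)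
  have hw2 : MemLp (fun x => (u x - a) - (v x - b)) 2 volume := hu2.sub hv2
  have hA : Integrable (fun x => (u x - a) ^ 2) volume := hu2.integrable_sq
  have hB : Integrable (fun x => (v x - b) ^ 2) volume := hv2.integrable_sq
  have hW : Integrable (fun x => ((u x - a) - (v x - b)) ^ 2) volume := hw2.integrable_sq
  have hD : Integrable (fun x => (u x - v x) ^ 2) volume := (hu.sub hv).integrable_sq
  set A := ∫ x, (u x - a) ^ 2 with hAdef
  set B := ∫ x, (v x - b) ^ 2 with hBdef
  set W := ∫ x, ((u x - a) - (v x - b)) ^ 2 with hWdef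
  set D := ∫ x in ω', (u x - v x) ^ 2 with hDdef
  have hA0 : 0 ≤ A := integral_nonneg fun x => sq_nonneg _
  have hB0 : 0 ≤ B := integral_nonneg fun x => sq_nonneg _
  have hW0 : 0 ≤ W := integral_nonneg fun x => sq_nonneg _
  have hD0 : 0 ≤ D := integral_nonneg fun x => sq_nonneg _
  -- W ≤ 2 (A + B)
  have hWle : W ≤ 2 * (A + B) := by
    have : W ≤ ∫ x, (2 * (u x - a) ^ 2 + 2 * (v x - b) ^ 2) := by
      refine integral_mono hW ((hA.const_mul 2).add (hB.const_mul 2)) fun x => ?_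
      nlinarith [sq_nonneg ((u x - a) + (v x - b))]
    rwa [integral_add (hA.const_mul 2) (hB.const_mul 2), integral_const_mul,
      integral_const_mul, ← mul_add] at this
  -- key1 : ∫_ω (u-v)^2 ≤ (5/2) W + (5/3) P c^2
  have key1 : (∫ x in ω, (u x - v x) ^ 2) ≤ 5 / 2 * W + 5 / 3 * P * c ^ 2 := by
    have step1 : (∫ x in ω, (u x - v x) ^ 2) ≤
        ∫ x in ω, (5 / 2 * ((u x - a) - (v x - b)) ^ 2 + 5 / 3 * c ^ 2) := by
      refine setIntegral_mono_on hD.integrableOn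
        (((hW.const_mul (5 / 2)).add (integrable_const _)).integrableOn) hω fun x _ => ?_
      have hx : u x - v x = ((u x - a) - (v x - b)) + c := by rw [hc]; ring
      rw [hx]; exact aux1 _ _
    have step2 : (∫ x in ω, (5 / 2 * ((u x - a) - (v x - b)) ^ 2 + 5 / 3 * c ^ 2)) =
        5 / 2 * (∫ x in ω, ((u x - a) - (v x - b)) ^ 2) + P * (5 / 3 * c ^ 2) := by
      rw [integral_add ((hW.const_mul (5 / 2)).integrableOn) (integrableOn_const ?_),
        integral_const_mul, setIntegral_const, smul_eq_mul, measureReal_def]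
      · exact (ENNReal.toReal_pos_iff.mp hωpos).2.ne
    have step3 : (∫ x in ω, ((u x - a) - (v x - b)) ^ 2) ≤ W :=
      setIntegral_le_integral hW (Filter.Eventually.of_forall fun x => sq_nonneg _)
    calc (∫ x in ω, (u x - v x) ^ 2) ≤ _ := step1
      _ = _ := step2
      _ ≤ 5 / 2 * W + 5 / 3 * P * c ^ 2 := by nlinarith [hωpos]
  -- key2 : Q c^2 ≤ 3 D + (3/2) W
  have key2 : Q * c ^ 2 ≤ 3 * D + 3 / 2 * W := by
    have e1 : Q * c ^ 2 = ∫ _ in ω', c ^ 2 := by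
      rw [setIntegral_const, smul_eq_mul, measureReal_def]
    have step1 : (∫ _ in ω', c ^ 2) ≤
        ∫ x in ω', (3 * (u x - v x) ^ 2 + 3 / 2 * ((u x - a) - (v x - b)) ^ 2) := by
      refine setIntegral_mono_on (integrableOn_const (
        (ENNReal.toReal_pos_iff.mp hω'pos).2.ne))
        (((hD.const_mul 3).add (hW.const_mul (3 / 2))).integrableOn) hω' fun x _ => ?_
      have hx : c = (u x - v x) - ((u x - a) - (v x - b)) := by rw [hc]; ring
      rw [hx]; exact aux2 _ _
    have step2 : (∫ x in ω', (3 * (u x - v x) ^ 2 + 3 / 2 * ((u x - a) - (v x - b)) ^ 2)) =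
        3 * D + 3 / 2 * ∫ x in ω', ((u x - a) - (v x - b)) ^ 2 := by
      rw [integral_add ((hD.const_mul 3).integrableOn) ((hW.const_mul (3 / 2)).integrableOn),
        integral_const_mul, integral_const_mul]
    have step3 : (∫ x in ω', ((u x - a) - (v x - b)) ^ 2) ≤ W :=
      setIntegral_le_integral hW (Filter.Eventually.of_forall fun x => sq_nonneg _)
    calc Q * c ^ 2 = _ := e1
      _ ≤ _ := step1
      _ = _ := step2
      _ ≤ 3 * D + 3 / 2 * W := by linarith
  -- final arithmetic
  have hc2 : c ^ 2 ≤ Q⁻¹ * (3 * D + 3 / 2 * W) := by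
    have h := mul_le_mul_of_nonneg_left key2 (le_of_lt (inv_pos.2 hω'pos))
    calc c ^ 2 = Q⁻¹ * (Q * c ^ 2) := by
          rw [← mul_assoc, inv_mul_cancel₀ (ne_of_gt hω'pos), one_mul]
      _ ≤ Q⁻¹ * (3 * D + 3 / 2 * W) := h
  have hP0 : 0 < P⁻¹ := inv_pos.2 hωpos
  have hQ0 : 0 < Q⁻¹ := inv_pos.2 hω'pos
  have lhs1 : P⁻¹ * (∫ x in ω, (u x - v x) ^ 2) ≤ P⁻¹ * (5 / 2 * W) + 5 / 3 * c ^ 2 := by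
    have := mul_le_mul_of_nonneg_left key1 (le_of_lt hP0)
    calc P⁻¹ * (∫ x in ω, (u x - v x) ^ 2) ≤ P⁻¹ * (5 / 2 * W + 5 / 3 * P * c ^ 2) := this
      _ = P⁻¹ * (5 / 2 * W) + P⁻¹ * P * (5 / 3 * c ^ 2) := by ring
      _ = P⁻¹ * (5 / 2 * W) + 5 / 3 * c ^ 2 := by
          rw [inv_mul_cancel₀ (ne_of_gt hωpos), one_mul]
  have final : P⁻¹ * (∫ x in ω, (u x - v x) ^ 2) ≤ 5 * (P⁻¹ + Q⁻¹) * (A + B + D) := by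
    have h1 : P⁻¹ * (5 / 2 * W) ≤ P⁻¹ * (5 * (A + B)) := by
      apply mul_le_mul_of_nonneg_left _ (le_of_lt hP0); linarith
    have h2 : 5 / 3 * c ^ 2 ≤ Q⁻¹ * (5 * D + 5 / 2 * W) := by
      have := mul_le_mul_of_nonneg_left hc2 (by norm_num : (0:ℝ) ≤ 5 / 3)
      calc 5 / 3 * c ^ 2 ≤ 5 / 3 * (Q⁻¹ * (3 * D + 3 / 2 * W)) := this
        _ = Q⁻¹ * (5 * D + 5 / 2 * W) := by ring
    have h3 : Q⁻¹ * (5 * D + 5 / 2 * W) ≤ Q⁻¹ * (5 * D + 5 * (A + B)) := by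
      apply mul_le_mul_of_nonneg_left _ (le_of_lt hQ0); linarith
    calc P⁻¹ * (∫ x in ω, (u x - v x) ^ 2)
        ≤ P⁻¹ * (5 / 2 * W) + 5 / 3 * c ^ 2 := lhs1
      _ ≤ P⁻¹ * (5 * (A + B)) + Q⁻¹ * (5 * D + 5 * (A + B)) := by linarith
      _ ≤ 5 * (P⁻¹ + Q⁻¹) * (A + B + D) := by
          have h4 : 5 * (P⁻¹ + Q⁻¹) * (A + B + D) =
              P⁻¹ * (5 * (A + B)) + Q⁻¹ * (5 * D + 5 * (A + B)) + 5 * (P⁻¹ * D) := by ring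
          linarith [mul_nonneg hP0.le hD0]
  exact final
end

section
/- Let u₂∞ > 0, C₀ > 0, M := 4·(u₂∞)² + 2·u₂∞ + √(u₂∞), and let u₁, u₂, u₃, a₁, a₂, a₃ ∈ [0, C₀] be reals with 4a₁ + 2a₂ + a₃ = M. Then there is a constant C depending only on C₀ such that |u₂ − u₂∞|² ≤ C·( Σⱼ |uⱼ − aⱼ|² + |u₂ − √u₁|² + |u₃ − √u₂|² ). -/
/-!
Write `f z = 4 z² + 2 z + √z`, so that the mass constraint reads `4 a₁ + 2 a₂ + a₃ = f u₂eq`.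
Since `f - 2 id` is monotone on `[0, ∞)`, `2 |u₂ - u₂eq| ≤ |f u₂ - f u₂eq|`, and
`f u₂ - f u₂eq = 4 (u₂² - u₁) + 4 (u₁ - a₁) + 2 (u₂ - a₂) + (√u₂ - u₃) + (u₃ - a₃)`.
On `[0, C₀]` the first term is at most `4 (C₀ + √C₀) |u₂ - √u₁|`, so `|u₂ - u₂eq|` is bounded
by a linear combination of the five residuals, and Cauchy–Schwarz squares the bound.
-/

open Real Set

lemma mul_abs_sub_le_abs_add_sub {s : Set ℝ} {g : ℝ → ℝ} (hg : MonotoneOn g s) {c x y : ℝ}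
    (hc : 0 ≤ c) (hx : x ∈ s) (hy : y ∈ s) :
    c * |x - y| ≤ |c * x + g x - (c * y + g y)| := by
  rcases le_total x y with hxy | hyx
  · have := hg hx hy hxy
    rw [abs_of_nonpos (sub_nonpos.2 hxy), abs_of_nonpos (by nlinarith)]
    nlinarith
  · have := hg hy hx hyx
    rw [abs_of_nonneg (sub_nonneg.2 hyx), abs_of_nonneg (by nlinarith)]
    nlinarith

lemma monotoneOn_four_mul_sq_add_sqrt : MonotoneOn (fun z : ℝ => 4 * z ^ 2 + √z) {z | 0 ≤ z} :=
  fun _ hx _ hy hxy => add_le_add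
    (mul_le_mul_of_nonneg_left (pow_left_monotoneOn hx hy hxy) (by norm_num)) (sqrt_le_sqrt hxy)

lemma abs_sq_sub_sq_le (a b : ℝ) : |a ^ 2 - b ^ 2| ≤ (|a| + |b|) * |a - b| := by
  rw [sq_sub_sq, abs_mul]
  exact mul_le_mul_of_nonneg_right (abs_add_le a b) (abs_nonneg _)

lemma abs_sq_sub_le_mul_abs_sub_sqrt {C₀ u v : ℝ} (hu : u ∈ Icc 0 C₀) (hv : v ∈ Icc 0 C₀) :
    |u ^ 2 - v| ≤ (C₀ + √C₀) * |u - √v| := by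
  calc |u ^ 2 - v| = |u ^ 2 - √v ^ 2| := by rw [sq_sqrt hv.1]
    _ ≤ (|u| + |√v|) * |u - √v| := abs_sq_sub_sq_le u √v
    _ ≤ (C₀ + √C₀) * |u - √v| := by
      rw [abs_of_nonneg hu.1, abs_of_nonneg (sqrt_nonneg v)]
      gcongr
      exacts [hu.2, hv.2]

lemma sq_sum_five_le (x₁ x₂ x₃ x₄ x₅ : ℝ) :
    (x₁ + x₂ + x₃ + x₄ + x₅) ^ 2 ≤ 5 * (x₁ ^ 2 + x₂ ^ 2 + x₃ ^ 2 + x₄ ^ 2 + x₅ ^ 2) := by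
  simpa [Fin.sum_univ_five] using
    sq_sum_le_card_mul_sum_sq (s := Finset.univ) (f := ![x₁, x₂, x₃, x₄, x₅])

lemma abs_sum_five_le (x₁ x₂ x₃ x₄ x₅ : ℝ) :
    |x₁ + x₂ + x₃ + x₄ + x₅| ≤ |x₁| + |x₂| + |x₃| + |x₄| + |x₅| := by
  simpa [Fin.sum_univ_five] using
    Finset.abs_sum_le_sum_abs (s := Finset.univ) ![x₁, x₂, x₃, x₄, x₅]

lemma two_mul_abs_sub_le_of_mass {C₀ u₂eq u₁ u₂ u₃ a₁ a₂ a₃ : ℝ} (hu₂eq : 0 ≤ u₂eq)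
    (hu₁ : u₁ ∈ Icc 0 C₀) (hu₂ : u₂ ∈ Icc 0 C₀)
    (hmass : 4 * a₁ + 2 * a₂ + a₃ = 4 * u₂eq ^ 2 + 2 * u₂eq + √u₂eq) :
    2 * |u₂ - u₂eq| ≤ 4 * ((C₀ + √C₀) * |u₂ - √u₁|) + 4 * |u₁ - a₁| + 2 * |u₂ - a₂| +
      |u₃ - √u₂| + |u₃ - a₃| := by
  have hsq := abs_sq_sub_le_mul_abs_sub_sqrt hu₂ hu₁
  calc 2 * |u₂ - u₂eq|
      ≤ |2 * u₂ + (4 * u₂ ^ 2 + √u₂) - (2 * u₂eq + (4 * u₂eq ^ 2 + √u₂eq))| :=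
        mul_abs_sub_le_abs_add_sub monotoneOn_four_mul_sq_add_sqrt zero_le_two hu₂.1 hu₂eq
    _ = |4 * (u₂ ^ 2 - u₁) + 4 * (u₁ - a₁) + 2 * (u₂ - a₂) + (√u₂ - u₃) + (u₃ - a₃)| := by
        congr 1
        linarith
    _ ≤ 4 * |u₂ ^ 2 - u₁| + 4 * |u₁ - a₁| + 2 * |u₂ - a₂| + |u₃ - √u₂| + |u₃ - a₃| := by
        have h := abs_sum_five_le (4 * (u₂ ^ 2 - u₁)) (4 * (u₁ - a₁)) (2 * (u₂ - a₂))
          (√u₂ - u₃) (u₃ - a₃)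
        rwa [abs_mul, abs_mul, abs_mul, abs_two, abs_of_pos (four_pos : (0 : ℝ) < 4),
          abs_sub_comm (√u₂)] at h
    _ ≤ _ := by gcongr

theorem pointwise_estimate_u2 (C₀ : ℝ) (hC₀ : 0 < C₀) :
    ∃ C : ℝ, 0 < C ∧ ∀ u₂eq u₁ u₂ u₃ a₁ a₂ a₃ : ℝ, 0 < u₂eq →
      u₁ ∈ Set.Icc 0 C₀ → u₂ ∈ Set.Icc 0 C₀ → u₃ ∈ Set.Icc 0 C₀ →
      a₁ ∈ Set.Icc 0 C₀ → a₂ ∈ Set.Icc 0 C₀ → a₃ ∈ Set.Icc 0 C₀ →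
      4 * a₁ + 2 * a₂ + a₃ = 4 * u₂eq ^ 2 + 2 * u₂eq + Real.sqrt u₂eq →
      |u₂ - u₂eq| ^ 2 ≤
        C * ((|u₁ - a₁| ^ 2 + |u₂ - a₂| ^ 2 + |u₃ - a₃| ^ 2) +
          |u₂ - Real.sqrt u₁| ^ 2 + |u₃ - Real.sqrt u₂| ^ 2) := by
  refine ⟨20 * (1 + C₀ + √C₀) ^ 2, by positivity, ?_⟩
  intro u₂eq u₁ u₂ u₃ a₁ a₂ a₃ hu₂eq hu₁ hu₂ _ _ _ _ hmass
  set S := |u₂ - √u₁| + |u₁ - a₁| + |u₂ - a₂| + |u₃ - √u₂| + |u₃ - a₃|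
  have hC : 0 ≤ C₀ + √C₀ := add_nonneg hC₀.le (sqrt_nonneg C₀)
  -- every weight in `two_mul_abs_sub_le_of_mass` is at most `4 (1 + C₀ + √C₀)`
  have hlin : |u₂ - u₂eq| ≤ 2 * (1 + C₀ + √C₀) * S := by
    linarith [two_mul_abs_sub_le_of_mass (u₃ := u₃) hu₂eq.le hu₁ hu₂ hmass,
      mul_nonneg hC (abs_nonneg (u₁ - a₁)), mul_nonneg hC (abs_nonneg (u₂ - a₂)),
      mul_nonneg hC (abs_nonneg (u₃ - √u₂)), mul_nonneg hC (abs_nonneg (u₃ - a₃)),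
      abs_nonneg (u₂ - √u₁), abs_nonneg (u₁ - a₁), abs_nonneg (u₂ - a₂),
      abs_nonneg (u₃ - √u₂), abs_nonneg (u₃ - a₃)]
  calc |u₂ - u₂eq| ^ 2
      ≤ (2 * (1 + C₀ + √C₀) * S) ^ 2 := pow_le_pow_left₀ (abs_nonneg _) hlin 2
    _ = 4 * (1 + C₀ + √C₀) ^ 2 * S ^ 2 := by ring
    _ ≤ 4 * (1 + C₀ + √C₀) ^ 2 * (5 * (|u₂ - √u₁| ^ 2 + |u₁ - a₁| ^ 2 + |u₂ - a₂| ^ 2 +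
        |u₃ - √u₂| ^ 2 + |u₃ - a₃| ^ 2)) := by
      gcongr
      exact sq_sum_five_le ..
    _ = _ := by ring
end
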